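/- arXiv:1211.4303 — 3 statements merged into one kernel-verified Lean document; each statement's English description precedes it below -/
import Mathlib

section
/- With T(z) = z³ − 3z, R(z) = a z + 1/(a z) and S(z) = a ω z + 1/(a ω z) where a ≠ 0 and ω² + ω + 1 = 0, there is no Möbius transformation σ ∈ PSL₂(ℂ) with R = σ ∘ S. Equivalently: there do not exist complex numbers p, q, r, s with ps − qr ≠ 0 such that R(z) = (p·S(z) + q)/(r·S(z) + s) for all z in the common domain. -/
/-! If `σ ∘ S = R` then `R` must be constant on the fibres of `S`. Writing `S(z) = J(aωz)` with
`J(x) = x + 1/x`, the fibre of `S` through `z = u/(aω)` also contains `1/(aωu)`, while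
`R(u/(aω)) = J(u/ω)` and `R(1/(aωu)) = J(ωu)`. Since `J(x) = J(y)` only when `x = y` or `xy = 1`,
this is impossible as soon as `ω² ≠ 1` and `u² ≠ 1`; and `u ∈ {2, 3}` keeps the denominator
`r·S(z) + s` nonzero. -/

theorem add_one_div_eq_add_one_div_iff {K : Type*} [Field K] {x y : K} (hx : x ≠ 0)
    (hy : y ≠ 0) : x + 1 / x = y + 1 / y ↔ x = y ∨ x * y = 1 := by
  have factor : x + 1 / x - (y + 1 / y) = (x - y) * (x * y - 1) / (x * y) := by
    field_simp
    ring
  rw [← sub_eq_zero, factor, div_eq_zero_iff, mul_eq_zero, mul_eq_zero, sub_eq_zero,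
    sub_eq_zero]
  simp [hx, hy]

theorem exists_mul_add_one_div_add_ne_zero {K : Type*} [Field K] [CharZero K] {r s : K}
    (hrs : r ≠ 0 ∨ s ≠ 0) : ∃ u : K, u ≠ 0 ∧ u ^ 2 ≠ 1 ∧ r * (u + 1 / u) + s ≠ 0 := by
  by_contra! H
  have h2 : r * (2 + 1 / 2) + s = 0 := H 2 two_ne_zero (by norm_num)
  have h3 : r * (3 + 1 / 3) + s = 0 := H 3 three_ne_zero (by norm_num)
  have hr : r = 0 := by linear_combination (6 / 5 : K) * (h3 - h2)
  have hs : s = 0 := by linear_combination h2 - (5 / 2 : K) * hr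
  exact hrs.elim (· hr) (· hs)

theorem sq_ne_one_of_sq_add_self_add_one_eq_zero {K : Type*} [Field K] [CharZero K] {ω : K}
    (hω : ω ^ 2 + ω + 1 = 0) : ω ^ 2 ≠ 1 := by
  intro h
  have hω' : ω = -2 := by linear_combination hω - h
  rw [hω'] at h
  norm_num at h

theorem stmt4 (a ω : ℂ) (ha : a ≠ 0) (hω : ω ^ 2 + ω + 1 = 0) :
    ¬ ∃ p q r s : ℂ, p * s - q * r ≠ 0 ∧
      ∀ z : ℂ, z ≠ 0 →
        r * (a * ω * z + 1 / (a * ω * z)) + s ≠ 0 →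
        a * z + 1 / (a * z) =
          (p * (a * ω * z + 1 / (a * ω * z)) + q) /
            (r * (a * ω * z + 1 / (a * ω * z)) + s) := by
  rintro ⟨p, q, r, s, hdet, h⟩
  have hω0 : ω ≠ 0 := by rintro rfl; norm_num at hω
  have hrs : r ≠ 0 ∨ s ≠ 0 := by
    by_contra! H
    exact hdet (by rw [H.1, H.2]; ring)
  obtain ⟨u, hu0, hu1, hden⟩ := exists_mul_add_one_div_add_ne_zero hrs
  have hS₁ : a * ω * (u / (a * ω)) = u := by field_simp
  have hS₂ : a * ω * (1 / (a * ω * u)) = 1 / u := by field_simp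
  have h₁ := h (u / (a * ω)) (by positivity) (by rwa [hS₁])
  have h₂ := h (1 / (a * ω * u)) (by simp [ha, hω0, hu0])
    (by rwa [hS₂, one_div_one_div, add_comm (1 / u)])
  rw [hS₁] at h₁
  rw [hS₂, one_div_one_div, add_comm (1 / u)] at h₂
  have hR₁ : a * (u / (a * ω)) = u / ω := by field_simp
  have hR₂ : a * (1 / (a * ω * u)) = 1 / (ω * u) := by field_simp
  have hfibre : u / ω + 1 / (u / ω) = ω * u + 1 / (ω * u) := by
    rw [← hR₁, h₁, ← h₂, hR₂, one_div_one_div, add_comm]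
  rcases (add_one_div_eq_add_one_div_iff (by positivity) (by positivity)).mp hfibre with
    heq | hprod
  · refine sq_ne_one_of_sq_add_self_add_one_eq_zero hω ?_
    field_simp at heq
    exact heq.symm
  · exact hu1 (by field_simp at hprod; linear_combination hprod)
end

section
/- For integers n, m ≥ 1, let T(z) = zⁿ(z+1)ᵐ, R(z) = (1 − zⁿ)/(z^{n+m} − 1), and S(z) = zᵐ(1 − zⁿ)/(z^{n+m} − 1). Then T(R(z)) = T(S(z)) as rational functions, i.e., the identity holds for all z ∈ ℂ where both sides are defined. -/
theorem stmt5 (n m : ℕ) (hn : 1 ≤ n) (hm : 1 ≤ m) (z : ℂ)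
    (hz : z ^ (n + m) - 1 ≠ 0) :
    ((1 - z ^ n) / (z ^ (n + m) - 1)) ^ n * ((1 - z ^ n) / (z ^ (n + m) - 1) + 1) ^ m =
      (z ^ m * (1 - z ^ n) / (z ^ (n + m) - 1)) ^ n *
        (z ^ m * (1 - z ^ n) / (z ^ (n + m) - 1) + 1) ^ m := by
  have h1 : (1 - z ^ n) / (z ^ (n + m) - 1) + 1
      = z ^ n * (z ^ m - 1) / (z ^ (n + m) - 1) := by
    field_simp
    ring
  have h2 : z ^ m * (1 - z ^ n) / (z ^ (n + m) - 1) + 1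
      = (z ^ m - 1) / (z ^ (n + m) - 1) := by
    field_simp
    ring
  rw [h1, h2, div_pow, div_pow, div_pow, div_pow, mul_pow, mul_pow, div_mul_div_comm,
    div_mul_div_comm]
  congr 1
  ring
end

section
/- Let f(z) = z^{d_f} and g(z) = z^{d_g} with d_f, d_g ≥ 2. Then Per(f) = Per(g) if and only if d_f and d_g have the same set of prime divisors (for every prime p, p ∣ d_f ⟺ p ∣ d_g). -/
/-- If `z ^ N = 1` and `d` is coprime to `N > 0`, then `z` is periodic for `z ↦ z ^ d`. -/
lemma per_of_root (z : ℂ) (N d : ℕ) (hN : 0 < N) (hd : 1 ≤ d) (hz : z ^ N = 1)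
    (hc : Nat.Coprime d N) : ∃ n : ℕ, 1 ≤ n ∧ z ^ d ^ n = z := by
  refine ⟨N.totient, Nat.totient_pos.2 hN, ?_⟩
  have h := Nat.ModEq.pow_totient hc
  have h1 : 1 ≤ d ^ N.totient := Nat.one_le_pow _ _ hd
  have hdvd : N ∣ d ^ N.totient - 1 := (Nat.modEq_iff_dvd' h1).mp h.symm
  obtain ⟨k, hk⟩ := hdvd
  have he : d ^ N.totient = N * k + 1 := by omega
  rw [he, pow_add, pow_mul, hz, one_pow, one_mul, pow_one]

/-- From a nonzero periodic point, get the root of unity equation. -/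
lemma root_of_per (z : ℂ) (d n : ℕ) (hd : 2 ≤ d) (hn : 1 ≤ n) (hz0 : z ≠ 0)
    (hzn : z ^ d ^ n = z) : z ^ (d ^ n - 1) = 1 := by
  have h1 : 1 ≤ d ^ n := Nat.one_le_pow _ _ (by omega)
  have he : z ^ (d ^ n - 1) * z = 1 * z := by
    rw [← pow_succ, one_mul]
    have : d ^ n - 1 + 1 = d ^ n := by omega
    rw [this, hzn]
  exact mul_right_cancel₀ hz0 he

lemma per_aux (df dg : ℕ) (hf : 2 ≤ df) (hg : 2 ≤ dg)
    (h : {z : ℂ | ∃ n : ℕ, 1 ≤ n ∧ z ^ df ^ n = z} ⊆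
      {z : ℂ | ∃ n : ℕ, 1 ≤ n ∧ z ^ dg ^ n = z})
    (p : ℕ) (hp : p.Prime) (hpf : ¬ p ∣ df) : ¬ p ∣ dg := by
  intro hpdg
  set z : ℂ := Complex.exp (2 * Real.pi * Complex.I / p) with hzdef
  have hprim : IsPrimitiveRoot z p := Complex.isPrimitiveRoot_exp p hp.ne_zero
  have hzp : z ^ p = 1 := hprim.pow_eq_one
  have hc : Nat.Coprime df p := (Nat.coprime_comm.mp (hp.coprime_iff_not_dvd.mpr hpf))
  have hzmem : z ∈ {z : ℂ | ∃ n : ℕ, 1 ≤ n ∧ z ^ df ^ n = z} :=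
    per_of_root z p df hp.pos (by omega) hzp hc
  obtain ⟨n, hn, hzn⟩ := h hzmem
  have hz0 : z ≠ 0 := Complex.exp_ne_zero _
  have hroot : z ^ (dg ^ n - 1) = 1 := root_of_per z dg n hg hn hz0 hzn
  have hpdvd : p ∣ dg ^ n - 1 := hprim.dvd_of_pow_eq_one _ hroot
  have hpn : p ∣ dg ^ n := dvd_pow hpdg (by omega)
  have h1 : 1 ≤ dg ^ n := Nat.one_le_pow _ _ (by omega)
  have : p ∣ 1 := by
    have := Nat.dvd_sub hpn hpdvd
    rwa [Nat.sub_sub_self h1] at this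
  exact Nat.Prime.one_lt hp |>.ne' (Nat.dvd_one.mp this)

lemma per_subset (df dg : ℕ) (hf : 2 ≤ df) (hg : 2 ≤ dg)
    (h : ∀ p : ℕ, p.Prime → p ∣ dg → p ∣ df) :
    {z : ℂ | ∃ n : ℕ, 1 ≤ n ∧ z ^ df ^ n = z} ⊆
      {z : ℂ | ∃ n : ℕ, 1 ≤ n ∧ z ^ dg ^ n = z} := by
  intro z hz
  obtain ⟨n, hn, hzn⟩ := hz
  by_cases hz0 : z = 0
  · exact ⟨1, le_refl 1, by rw [hz0]; exact zero_pow (by positivity)⟩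
  · set N := df ^ n - 1 with hNdef
    have hdfn : 2 ≤ df ^ n := le_trans hf (Nat.le_self_pow (by omega) _)
    have hN : 0 < N := by omega
    have hzN : z ^ N = 1 := root_of_per z df n hf hn hz0 hzn
    have hc : Nat.Coprime dg N := by
      by_contra hc
      have hp := Nat.minFac_prime hc
      set p := (Nat.gcd dg N).minFac
      have hpdg : p ∣ dg := (Nat.minFac_dvd _).trans (Nat.gcd_dvd_left _ _)
      have hpN : p ∣ N := (Nat.minFac_dvd _).trans (Nat.gcd_dvd_right _ _)
      have hpdf : p ∣ df := h p hp hpdg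
      have hpn : p ∣ df ^ n := dvd_pow hpdf (by omega)
      have : p ∣ 1 := by
        have := Nat.dvd_sub hpn hpN
        rwa [hNdef, Nat.sub_sub_self (by omega)] at this
      exact hp.one_lt.ne' (Nat.dvd_one.mp this)
    exact per_of_root z N dg hN (by omega) hzN hc

theorem stmt12 (df dg : ℕ) (hf : 2 ≤ df) (hg : 2 ≤ dg) :
    {z : ℂ | ∃ n : ℕ, 1 ≤ n ∧ z ^ df ^ n = z} =
      {z : ℂ | ∃ n : ℕ, 1 ≤ n ∧ z ^ dg ^ n = z} ↔
    (∀ p : ℕ, p.Prime → (p ∣ df ↔ p ∣ dg)) := by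
  constructor
  · intro h p hp
    constructor
    · intro hpdf
      by_contra hpdg
      exact per_aux dg df hg hf h.symm.subset p hp hpdg hpdf
    · intro hpdg
      by_contra hpdf
      exact per_aux df dg hf hg h.subset p hp hpdf hpdg
  · intro h
    exact Set.Subset.antisymm
      (per_subset df dg hf hg (fun p hp hpdg => (h p hp).mpr hpdg))
      (per_subset dg df hg hf (fun p hp hpdf => (h p hp).mp hpdf))
end
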